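/- arXiv:2508.16247 — 3 statements merged into one kernel-verified Lean document; each statement's English description precedes it below -/
import Mathlib

section
/- Let p > 1. For w, κ ∈ ℝ define 𝔤₊(w,κ) := (p−1) ∫_κ^w |τ|^{p−2} ((τ−κ)₊ + (w−τ)₊) dτ and 𝔤₋(w,κ) := −(p−1) ∫_κ^w |τ|^{p−2} ((τ−κ)₋ + (w−τ)₋) dτ. Then there exist constants c₁, c₂ > 0, depending only on p, such that for all w, κ ∈ ℝ: c₁ (|w|+|κ|)^{p−2} (w−κ)₊² ≤ 𝔤₊(w,κ) ≤ c₂ (|w|+|κ|)^{p−2} (w−κ)₊², and c₁ (|w|+|κ|)^{p−2} (w−κ)₋² ≤ 𝔤₋(w,κ) ≤ c₂ (|w|+|κ|)^{p−2} (w−κ)₋², where for 1 < p < 2 the expression (|w|+|κ|)^{p−2}(w−κ)_±² is interpreted as 0 when w = κ. -/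
open Real MeasureTheory Set intervalIntegral

noncomputable section

/-- The auxiliary function
`𝔤₊(w,κ) = (p-1) ∫_κ^w |τ|^{p-2} ((τ-κ)₊ + (w-τ)₊) dτ`. -/
def gPlus (p w κ : ℝ) : ℝ :=
  (p - 1) * ∫ τ in κ..w, |τ| ^ (p - 2) * (max (τ - κ) 0 + max (w - τ) 0)

/-- The auxiliary function
`𝔤₋(w,κ) = -(p-1) ∫_κ^w |τ|^{p-2} ((τ-κ)₋ + (w-τ)₋) dτ`. -/
def gMinus (p w κ : ℝ) : ℝ :=
  -((p - 1) * ∫ τ in κ..w, |τ| ^ (p - 2) * (max (κ - τ) 0 + max (τ - w) 0))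

lemma abs_rpow_intInt {r : ℝ} (hr : -1 < r) (a b : ℝ) :
    IntervalIntegrable (fun x : ℝ => |x| ^ r) volume a b := by
  have h : ∀ c : ℝ, 0 ≤ c → IntervalIntegrable (fun x : ℝ => |x| ^ r) volume 0 c := by
    intro c hc
    have h0 := intervalIntegrable_rpow' (a := 0) (b := c) hr
    rw [intervalIntegrable_iff] at h0 ⊢
    refine h0.congr_fun ?_ measurableSet_uIoc
    intro x hx
    rw [uIoc_of_le hc] at hx
    simp [abs_of_pos hx.1]
  have h' : ∀ c : ℝ, IntervalIntegrable (fun x : ℝ => |x| ^ r) volume 0 c := by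
    intro c
    rcases le_total 0 c with hc | hc
    · exact h c hc
    · rw [IntervalIntegrable.iff_comp_neg]
      simpa using h (-c) (by linarith)
  exact (h' a).symm.trans (h' b)

lemma core_aux (p : ℝ) (hp : 1 < p) :
    ∃ c₁ c₂ : ℝ, 0 < c₁ ∧ 0 < c₂ ∧ ∀ w κ : ℝ, κ < w → |κ| ≤ w →
      c₁ * (|w| + |κ|) ^ (p - 2) * (w - κ) ≤ (∫ τ in κ..w, |τ| ^ (p - 2)) ∧
      (∫ τ in κ..w, |τ| ^ (p - 2)) ≤ c₂ * (|w| + |κ|) ^ (p - 2) * (w - κ) := by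
  have hr1 : (-1:ℝ) < p - 2 := by linarith
  have hint := abs_rpow_intInt hr1
  rcases le_or_gt 2 p with hp2 | hp2
  · -- p ≥ 2
    refine ⟨(4:ℝ) ^ (1 - p), 1, by positivity, one_pos, fun w κ hkw hkb => ?_⟩
    have hr : (0:ℝ) ≤ p - 2 := by linarith
    have hw : 0 < w := by rcases abs_cases κ with ⟨h1, h2⟩ | ⟨h1, h2⟩ <;> linarith
    set s : ℝ := |w| + |κ| with hs_def
    have habsw : |w| = w := abs_of_pos hw
    have hws : w ≤ s := by rw [hs_def, habsw]; linarith [abs_nonneg κ]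
    have hsw : s ≤ 2 * w := by rw [hs_def, habsw]; linarith
    have hs : 0 < s := by linarith
    have hkneg : -w ≤ κ := by linarith [neg_abs_le κ]
    constructor
    · -- lower bound
      have h2w : s ^ (p-2) ≤ (4:ℝ) ^ (p-2) * (w/2) ^ (p-2) := by
        rw [← mul_rpow (by norm_num) (by linarith)]
        apply rpow_le_rpow hs.le (by linarith) hr
      have h41 : (4:ℝ) ^ (1-p) * (4:ℝ) ^ (p-2) = 1/4 := by
        rw [← rpow_add (by norm_num : (0:ℝ) < 4), show (1-p) + (p-2) = (-1:ℝ) by ring,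
          rpow_neg_one]
        norm_num
      have hq : (0:ℝ) < (4:ℝ) ^ (1-p) := by positivity
      have hwh : (0:ℝ) ≤ (w/2) ^ (p-2) := by positivity
      have hkey2 : (4:ℝ) ^ (1-p) * s ^ (p-2) ≤ (1/4) * (w/2) ^ (p-2) := by
        calc (4:ℝ) ^ (1-p) * s ^ (p-2)
            ≤ (4:ℝ) ^ (1-p) * ((4:ℝ) ^ (p-2) * (w/2) ^ (p-2)) :=
              mul_le_mul_of_nonneg_left h2w hq.le
          _ = (1/4) * (w/2) ^ (p-2) := by rw [← mul_assoc, h41]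
      rcases le_or_gt (w/2) κ with hcase | hcase
      · -- κ ≥ w/2
        have hlb : ∀ τ ∈ Icc κ w, (fun _ : ℝ => (w/2) ^ (p-2)) τ ≤ |τ| ^ (p-2) := by
          intro τ hτ
          exact rpow_le_rpow (by linarith) (le_trans (by linarith [hτ.1]) (le_abs_self τ)) hr
        have h := intervalIntegral.integral_mono_on hkw.le intervalIntegrable_const
          (hint κ w) hlb
        rw [intervalIntegral.integral_const, smul_eq_mul] at h
        have e1 := mul_le_mul_of_nonneg_right hkey2 (by linarith : (0:ℝ) ≤ w - κ)
        have e3 := mul_nonneg hwh (by linarith : (0:ℝ) ≤ w - κ)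
        linarith
      · -- κ < w/2
        have hmono : (∫ τ in (w/2)..w, |τ| ^ (p-2)) ≤ ∫ τ in κ..w, |τ| ^ (p-2) :=
          intervalIntegral.integral_mono_interval (le_of_lt hcase) (by linarith) le_rfl
            (ae_of_all _ fun x => rpow_nonneg (abs_nonneg x) _) (hint κ w)
        have hlb : ∀ τ ∈ Icc (w/2) w, (fun _ : ℝ => (w/2) ^ (p-2)) τ ≤ |τ| ^ (p-2) := by
          intro τ hτ
          exact rpow_le_rpow (by linarith) (le_trans hτ.1 (le_abs_self τ)) hr
        have h := intervalIntegral.integral_mono_on (by linarith : w/2 ≤ w)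
          intervalIntegrable_const (hint (w/2) w) hlb
        rw [intervalIntegral.integral_const, smul_eq_mul] at h
        have e1 := mul_le_mul_of_nonneg_right hkey2 (by linarith : (0:ℝ) ≤ w - κ)
        have e2 := mul_le_mul_of_nonneg_right (by linarith : w - κ ≤ 2*w)
          (by positivity : (0:ℝ) ≤ (1/4) * (w/2) ^ (p-2))
        linarith
    · -- upper bound
      have hub : ∀ τ ∈ Icc κ w, |τ| ^ (p-2) ≤ (fun _ : ℝ => s ^ (p-2)) τ := by
        intro τ hτ
        apply rpow_le_rpow (abs_nonneg τ) _ hr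
        rw [abs_le]
        constructor
        · linarith [hτ.1, neg_abs_le κ, abs_nonneg w]
        · linarith [hτ.2, abs_nonneg κ, le_abs_self w]
      have h := intervalIntegral.integral_mono_on hkw.le (hint κ w)
        intervalIntegrable_const hub
      rw [intervalIntegral.integral_const, smul_eq_mul] at h
      linarith
  · -- 1 < p < 2
    refine ⟨(4:ℝ) ^ (1 - p), (4:ℝ) ^ (2 - p) + (2:ℝ) ^ (4 - p) / (p - 1),
      by positivity,
      add_pos (by positivity) (div_pos (by positivity) (by linarith)),
      fun w κ hkw hkb => ?_⟩
    have hr : p - 2 < 0 := by linarith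
    have hw : 0 < w := by rcases abs_cases κ with ⟨h1, h2⟩ | ⟨h1, h2⟩ <;> linarith
    set s : ℝ := |w| + |κ| with hs_def
    have habsw : |w| = w := abs_of_pos hw
    have hws : w ≤ s := by rw [hs_def, habsw]; linarith [abs_nonneg κ]
    have hsw : s ≤ 2 * w := by rw [hs_def, habsw]; linarith
    have hs : 0 < s := by linarith
    have hkneg : -w ≤ κ := by linarith [neg_abs_le κ]
    have hsr : (2*w) ^ (p-2) ≤ s ^ (p-2) := rpow_le_rpow_of_nonpos hs hsw hr.le
    constructor
    · -- lower bound
      have h0 : ∀ᵐ x ∂(volume : Measure ℝ), x ≠ 0 := by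
        rw [ae_iff]
        have : {x : ℝ | ¬ x ≠ 0} = {0} := by ext x; simp
        rw [this]
        exact measure_singleton 0
      have hae : (fun _ : ℝ => s ^ (p-2)) ≤ᵐ[volume.restrict (Icc κ w)]
          fun τ : ℝ => |τ| ^ (p-2) := by
        filter_upwards [ae_restrict_of_ae h0, ae_restrict_mem measurableSet_Icc]
          with τ hτ0 hτ
        refine rpow_le_rpow_of_nonpos (abs_pos.mpr hτ0) ?_ hr.le
        rw [abs_le]
        constructor
        · linarith [hτ.1, neg_abs_le κ, abs_nonneg w]
        · linarith [hτ.2, abs_nonneg κ, le_abs_self w]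
      have h := intervalIntegral.integral_mono_ae_restrict hkw.le intervalIntegrable_const
        (hint κ w) hae
      rw [intervalIntegral.integral_const, smul_eq_mul] at h
      have h41 : (4:ℝ) ^ (1-p) ≤ 1 :=
        rpow_le_one_of_one_le_of_nonpos (by norm_num) (by linarith)
      have e1 := mul_le_mul_of_nonneg_right h41
        (mul_nonneg (rpow_nonneg hs.le (p-2)) (by linarith : (0:ℝ) ≤ w - κ))
      linarith
    · -- upper bound
      rcases le_or_gt (w/2) κ with hcase | hcase
      · -- κ ≥ w/2
        have hub : ∀ τ ∈ Icc κ w, |τ| ^ (p-2) ≤ (fun _ : ℝ => (w/2) ^ (p-2)) τ := by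
          intro τ hτ
          exact rpow_le_rpow_of_nonpos (by linarith)
            (le_trans (by linarith [hτ.1]) (le_abs_self τ)) hr.le
        have h := intervalIntegral.integral_mono_on hkw.le (hint κ w)
          intervalIntegrable_const hub
        rw [intervalIntegral.integral_const, smul_eq_mul] at h
        have hm : (4:ℝ) ^ (p-2) * (w/2) ^ (p-2) = (2*w) ^ (p-2) := by
          rw [show (2:ℝ)*w = 4*(w/2) by ring, mul_rpow (by norm_num) (by linarith)]
        have h42 : (4:ℝ) ^ (2-p) * (4:ℝ) ^ (p-2) = 1 := by
          rw [← rpow_add (by norm_num : (0:ℝ) < 4), show (2-p) + (p-2) = (0:ℝ) by ring,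
            rpow_zero]
        have hq2 : (0:ℝ) < (4:ℝ) ^ (2-p) := by positivity
        have key : (w/2) ^ (p-2) ≤ (4:ℝ) ^ (2-p) * s ^ (p-2) := by
          calc (w/2) ^ (p-2) = ((4:ℝ) ^ (2-p) * (4:ℝ) ^ (p-2)) * (w/2) ^ (p-2) := by
                rw [h42, one_mul]
            _ = (4:ℝ) ^ (2-p) * (2*w) ^ (p-2) := by rw [mul_assoc, hm]
            _ ≤ (4:ℝ) ^ (2-p) * s ^ (p-2) := mul_le_mul_of_nonneg_left hsr hq2.le
        have e1 := mul_le_mul_of_nonneg_left key (by linarith : (0:ℝ) ≤ w - κ)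
        have e2 : (0:ℝ) ≤ (2:ℝ) ^ (4-p) / (p-1) * (s ^ (p-2) * (w - κ)) :=
          mul_nonneg (div_pos (by positivity) (by linarith)).le
            (mul_nonneg (rpow_nonneg hs.le (p-2)) (by linarith))
        linarith
      · -- κ < w/2
        have hmono : (∫ τ in κ..w, |τ| ^ (p-2)) ≤ ∫ τ in (-w)..w, |τ| ^ (p-2) :=
          intervalIntegral.integral_mono_interval hkneg hkw.le le_rfl
            (ae_of_all _ fun x => rpow_nonneg (abs_nonneg x) _) (hint (-w) w)
        have hposint : (∫ τ in (0:ℝ)..w, |τ| ^ (p-2)) = w ^ (p-1) / (p-1) := by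
          have h1 : (∫ τ in (0:ℝ)..w, |τ| ^ (p-2)) = ∫ τ in (0:ℝ)..w, τ ^ (p-2) := by
            apply intervalIntegral.integral_congr
            intro τ hτ
            rw [uIcc_of_le hw.le] at hτ
            show |τ| ^ (p-2) = τ ^ (p-2)
            rw [abs_of_nonneg hτ.1]
          rw [h1, integral_rpow (Or.inl hr1), show p - 2 + 1 = p - 1 by ring,
            Real.zero_rpow (by linarith : p - 1 ≠ 0)]
          ring
        have hnegint : (∫ τ in (-w)..(0:ℝ), |τ| ^ (p-2)) = w ^ (p-1) / (p-1) := by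
          have h3 := intervalIntegral.integral_comp_neg (a := (0:ℝ)) (b := w)
            (fun τ : ℝ => |τ| ^ (p-2))
          simp only [abs_neg, neg_zero] at h3
          rw [← h3, hposint]
        have hsplit := intervalIntegral.integral_add_adjacent_intervals
          (hint (-w) 0) (hint 0 w)
        have hfull : (∫ τ in (-w)..w, |τ| ^ (p-2)) = 2 * w ^ (p-1) / (p-1) := by
          rw [← hsplit, hposint, hnegint]; ring
        have hm2 : (2*w) ^ (p-2) = (2:ℝ) ^ (p-2) * w ^ (p-2) :=
          mul_rpow (by norm_num) hw.le
        have h2m : (2:ℝ) ^ (4-p) * (2:ℝ) ^ (p-2) = 4 := by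
          rw [← rpow_add (by norm_num : (0:ℝ) < 2), show (4-p) + (p-2) = (2:ℝ) by ring]
          rw [show (2:ℝ) = ((2:ℕ):ℝ) by norm_num, rpow_natCast]
          norm_num
        have hwr1 : w ^ (p-1) = w ^ (p-2) * w := by
          rw [show p - 1 = p - 2 + 1 by ring, rpow_add_one (ne_of_gt hw)]
        have hC : (0:ℝ) < (2:ℝ) ^ (4-p) / (p-1) := div_pos (by positivity) (by linarith)
        have b2 : (2:ℝ) ^ (4-p) / (p-1) * ((2:ℝ) ^ (p-2) * w ^ (p-2)) * (w/2)
            = 2 * w ^ (p-1) / (p-1) := by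
          have hp1 : p - 1 ≠ 0 := by linarith
          rw [hwr1]
          field_simp
          linear_combination h2m
        have b1 : (2:ℝ) ^ (4-p) / (p-1) * ((2*w) ^ (p-2) * (w/2))
            ≤ (2:ℝ) ^ (4-p) / (p-1) * (s ^ (p-2) * (w - κ)) := by
          apply mul_le_mul_of_nonneg_left _ hC.le
          exact mul_le_mul hsr (by linarith) (by linarith) (rpow_nonneg hs.le _)
        rw [hm2] at b1
        have e2 : (0:ℝ) ≤ (4:ℝ) ^ (2-p) * (s ^ (p-2) * (w - κ)) :=
          mul_nonneg (by positivity)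
            (mul_nonneg (rpow_nonneg hs.le (p-2)) (by linarith))
        linarith

lemma gMinus_eq (p w κ : ℝ) : gMinus p w κ = gPlus p κ w := by
  have h : (∫ τ in w..κ, |τ| ^ (p - 2) * (max (τ - w) 0 + max (κ - τ) 0))
      = -∫ τ in κ..w, |τ| ^ (p - 2) * (max (κ - τ) 0 + max (τ - w) 0) := by
    rw [intervalIntegral.integral_symm]
    congr 1
    apply intervalIntegral.integral_congr
    intro τ _
    show |τ| ^ (p - 2) * (max (τ - w) 0 + max (κ - τ) 0)
        = |τ| ^ (p - 2) * (max (κ - τ) 0 + max (τ - w) 0)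
    ring
  unfold gMinus gPlus
  rw [h]; ring

lemma gPlus_of_le {p w κ : ℝ} (h : w ≤ κ) : gPlus p w κ = 0 := by
  unfold gPlus
  have : ∫ τ in κ..w, |τ| ^ (p - 2) * (max (τ - κ) 0 + max (w - τ) 0)
      = ∫ _ in κ..w, (0:ℝ) := by
    apply intervalIntegral.integral_congr
    intro τ hτ
    rw [uIcc_comm, uIcc_of_le h] at hτ
    show |τ| ^ (p - 2) * (max (τ - κ) 0 + max (w - τ) 0) = 0
    rw [max_eq_right (by linarith [hτ.2] : τ - κ ≤ 0),
      max_eq_right (by linarith [hτ.1] : w - τ ≤ 0)]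
    simp
  rw [this]; simp

lemma gPlus_of_lt {p w κ : ℝ} (h : κ ≤ w) :
    gPlus p w κ = (p - 1) * ((w - κ) * ∫ τ in κ..w, |τ| ^ (p - 2)) := by
  unfold gPlus
  congr 1
  rw [← intervalIntegral.integral_const_mul]
  apply intervalIntegral.integral_congr
  intro τ hτ
  rw [uIcc_of_le h] at hτ
  show |τ| ^ (p - 2) * (max (τ - κ) 0 + max (w - τ) 0) = (w - κ) * |τ| ^ (p - 2)
  rw [max_eq_left (by linarith [hτ.1] : (0:ℝ) ≤ τ - κ),
    max_eq_left (by linarith [hτ.2] : (0:ℝ) ≤ w - τ)]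
  ring

lemma core (p : ℝ) (hp : 1 < p) :
    ∃ c₁ c₂ : ℝ, 0 < c₁ ∧ 0 < c₂ ∧ ∀ w κ : ℝ, κ < w →
      c₁ * (|w| + |κ|) ^ (p - 2) * (w - κ) ≤ (∫ τ in κ..w, |τ| ^ (p - 2)) ∧
      (∫ τ in κ..w, |τ| ^ (p - 2)) ≤ c₂ * (|w| + |κ|) ^ (p - 2) * (w - κ) := by
  obtain ⟨c₁, c₂, h1, h2, H⟩ := core_aux p hp
  refine ⟨c₁, c₂, h1, h2, fun w κ hkw => ?_⟩
  rcases le_or_gt |κ| w with hc | hc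
  · exact H w κ hkw hc
  · have hk2 : |(-w)| ≤ -κ := by
      rw [abs_neg, abs_le]
      rcases abs_cases κ with ⟨e1, e2⟩ | ⟨e1, e2⟩ <;>
        constructor <;> linarith [le_abs_self w, neg_abs_le w]
    have := H (-κ) (-w) (by linarith) hk2
    have e : |(-κ)| + |(-w)| = |w| + |κ| := by rw [abs_neg, abs_neg, add_comm]
    have ee : -κ - -w = w - κ := by ring
    rw [e, ee] at this
    have hint_eq : (∫ τ in κ..w, |τ| ^ (p - 2)) = ∫ τ in (-w)..(-κ), |τ| ^ (p - 2) := by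
      have h3 := intervalIntegral.integral_comp_neg (a := κ) (b := w)
        (fun τ : ℝ => |τ| ^ (p - 2))
      simp only [abs_neg] at h3
      exact h3
    rw [hint_eq]
    exact this

/-- two-sided bounds for `𝔤₊` and `𝔤₋`.  The convention that
`(|w|+|κ|)^{p-2} (w-κ)_±²` is interpreted as `0` when `w = κ` is automatic from the
`Real.rpow` junk value `0 ^ y = 0` for `y ≠ 0` (and the factor `(w-κ)_±² = 0`). -/
theorem statement14 (p : ℝ) (hp : 1 < p) :
    ∃ c₁ c₂ : ℝ, 0 < c₁ ∧ 0 < c₂ ∧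
      ∀ w κ : ℝ,
        c₁ * (|w| + |κ|) ^ (p - 2) * (max (w - κ) 0) ^ 2 ≤ gPlus p w κ ∧
        gPlus p w κ ≤ c₂ * (|w| + |κ|) ^ (p - 2) * (max (w - κ) 0) ^ 2 ∧
        c₁ * (|w| + |κ|) ^ (p - 2) * (max (κ - w) 0) ^ 2 ≤ gMinus p w κ ∧
        gMinus p w κ ≤ c₂ * (|w| + |κ|) ^ (p - 2) * (max (κ - w) 0) ^ 2 := by
  obtain ⟨c₁, c₂, h1, h2, H⟩ := core p hp
  have hp1 : (0:ℝ) < p - 1 := by linarith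
  have key : ∀ a b : ℝ,
      (p-1) * c₁ * (|a| + |b|) ^ (p - 2) * (max (a - b) 0) ^ 2 ≤ gPlus p a b ∧
      gPlus p a b ≤ (p-1) * c₂ * (|a| + |b|) ^ (p - 2) * (max (a - b) 0) ^ 2 := by
    intro a b
    rcases le_or_gt a b with hab | hab
    · rw [gPlus_of_le hab, max_eq_right (by linarith : a - b ≤ 0)]
      norm_num
    · obtain ⟨l, u⟩ := H a b hab
      rw [gPlus_of_lt hab.le, max_eq_left (by linarith : (0:ℝ) ≤ a - b)]
      constructor
      · have t1 := mul_le_mul_of_nonneg_right l (by linarith : (0:ℝ) ≤ a - b)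
        have t2 := mul_le_mul_of_nonneg_left t1 hp1.le
        nlinarith [t2]
      · have t1 := mul_le_mul_of_nonneg_right u (by linarith : (0:ℝ) ≤ a - b)
        have t2 := mul_le_mul_of_nonneg_left t1 hp1.le
        nlinarith [t2]
  refine ⟨(p-1) * c₁, (p-1) * c₂, by positivity, by positivity, fun w κ => ?_⟩
  refine ⟨(key w κ).1, (key w κ).2, ?_, ?_⟩
  · rw [gMinus_eq, add_comm |w| |κ|]
    exact (key κ w).1
  · rw [gMinus_eq, add_comm |w| |κ|]
    exact (key κ w).2


end
end

section
/- Let p > 1, k > 0 and ℓ ≥ 0 be real numbers, and if p ≥ 2 assume in addition ℓ ≤ k. For i ∈ ℕ set k_i := (1 − 2^{−i}) k. Define c(p) := 1 if 1 < p < 2 and c(p) := (p−1)^p · 2^{p(p+1)(p−2)/(p−1)} if p ≥ 2. Then for every i ∈ ℕ: [ (ℓ^{p−1} + k_{i+1}^{p−1})^{1/(p−1)} − (ℓ^{p−1} + k_i^{p−1})^{1/(p−1)} ]^p ≥ k^p / ( c(p) · 2^{(i+2)·p·max(2,p)} ). -/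
set_option maxHeartbeats 1000000

open Real Set

/-- MVT lower bound for the gap of `F x = (ℓ^q + x^q)^(1/q)`. -/
lemma stmt15_mvt (q ℓ : ℝ) (hq : 0 < q) (_hℓ : 0 ≤ ℓ) {a b m : ℝ} (ha : 0 < a) (hab : a < b)
    (hm : ∀ x ∈ Set.Icc a b, m ≤ x ^ (q - 1) * (ℓ ^ q + x ^ q) ^ (1 / q - 1)) :
    (b - a) * m ≤ (ℓ ^ q + b ^ q) ^ (1 / q) - (ℓ ^ q + a ^ q) ^ (1 / q) := by
  set F : ℝ → ℝ := fun x => (ℓ ^ q + x ^ q) ^ (1 / q)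
  set f' : ℝ → ℝ := fun x => x ^ (q - 1) * (ℓ ^ q + x ^ q) ^ (1 / q - 1)
  have hderiv : ∀ x : ℝ, 0 < x → HasDerivAt F (f' x) x := by
    intro x hx
    have hxq : (0:ℝ) < x ^ q := Real.rpow_pos_of_pos hx q
    have hg : (0:ℝ) < ℓ ^ q + x ^ q := by positivity
    have h1 : HasDerivAt (fun y : ℝ => ℓ ^ q + y ^ q) (q * x ^ (q - 1)) x :=
      (Real.hasDerivAt_rpow_const (Or.inl hx.ne')).const_add _
    have h2 := h1.rpow_const (p := 1 / q) (Or.inl hg.ne')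
    convert h2 using 1
    rw [mul_comm (q * x ^ (q - 1)) (1 / q), ← mul_assoc, one_div, inv_mul_cancel₀ hq.ne',
      one_mul]
    show x ^ (q - 1) * (ℓ ^ q + x ^ q) ^ (1 / q - 1) = _
    rw [one_div]
  have hcont : ContinuousOn F (Set.Icc a b) := fun x hx =>
    ((hderiv x (lt_of_lt_of_le ha hx.1)).continuousAt).continuousWithinAt
  obtain ⟨c, hc, hceq⟩ := exists_hasDerivAt_eq_slope F f' hab hcont
    (fun x hx => hderiv x (lt_trans ha hx.1))
  have hba : (0:ℝ) < b - a := by linarith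
  have : F b - F a = (b - a) * f' c := by
    rw [hceq]; field_simp
  rw [this]
  exact mul_le_mul_of_nonneg_left (hm c (Set.mem_Icc_of_Ioo hc)) hba.le

/-- Gap bound in the case `q ≤ 1`. -/
lemma stmt15_gap_le_one (q ℓ : ℝ) (hq0 : 0 < q) (hq1 : q ≤ 1) (hℓ : 0 ≤ ℓ) {a b : ℝ}
    (ha : 0 ≤ a) (hab : a < b) :
    b - a ≤ (ℓ ^ q + b ^ q) ^ (1 / q) - (ℓ ^ q + a ^ q) ^ (1 / q) := by
  rcases ha.eq_or_lt with rfl | ha'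
  · -- a = 0 : superadditivity
    have hb0 : (0:ℝ) ≤ b := hab.le
    have h := NNReal.rpow_add_rpow_le (p := q) (q := 1) (NNReal.mk ℓ hℓ) (NNReal.mk b hb0) hq0 hq1
    simp only [NNReal.rpow_one, one_div_one, NNReal.rpow_one] at h
    have h2 := NNReal.coe_le_coe.2 h
    push_cast [NNReal.coe_rpow] at h2
    have h0 : (0:ℝ) ^ q = 0 := Real.zero_rpow hq0.ne'
    have hl : (ℓ ^ q + (0:ℝ) ^ q) ^ (1 / q) = ℓ := by
      rw [h0, add_zero, ← Real.rpow_mul hℓ q (1/q), mul_one_div_cancel hq0.ne', Real.rpow_one]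
    rw [hl]
    linarith [h2]
  · -- 0 < a : MVT with m = 1
    have key := stmt15_mvt q ℓ hq0 hℓ ha' hab (m := 1) ?_
    · linarith [key]
    intro x hx
    have hx0 : 0 < x := lt_of_lt_of_le ha' hx.1
    have e1 : x ^ (1 - q) ≤ (ℓ ^ q + x ^ q) ^ (1 / q - 1) := by
      have : x ^ (1 - q) = (x ^ q) ^ (1 / q - 1) := by
        rw [← Real.rpow_mul hx0.le]
        congr 1
        field_simp
      rw [this]
      have h1q : 1 ≤ 1 / q := by rw [le_div_iff₀ hq0]; linarith
      exact Real.rpow_le_rpow (Real.rpow_nonneg hx0.le q)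
        (le_add_of_nonneg_left (Real.rpow_nonneg hℓ q)) (by linarith)
    calc (1:ℝ) = x ^ (q - 1) * x ^ (1 - q) := by
          rw [← Real.rpow_add hx0]; norm_num
      _ ≤ x ^ (q - 1) * (ℓ ^ q + x ^ q) ^ (1 / q - 1) :=
          mul_le_mul_of_nonneg_left e1 (Real.rpow_nonneg hx0.le _)

/-- lower bound for the gap of truncation levels, proof of (3.3):
for `k_i = (1 - 2^{-i}) k`,
`[(ℓ^{p-1} + k_{i+1}^{p-1})^{1/(p-1)} - (ℓ^{p-1} + k_i^{p-1})^{1/(p-1)}]^p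
  ≥ k^p / (c(p) 2^{(i+2) p (2 ∨ p)})`. -/
theorem statement15 (p k ℓ : ℝ) (hp : 1 < p) (hk : 0 < k) (hℓ : 0 ≤ ℓ)
    (hℓk : 2 ≤ p → ℓ ≤ k) :
    ∀ i : ℕ,
      ((ℓ ^ (p - 1) + ((1 - (2 : ℝ) ^ (-((i : ℝ) + 1))) * k) ^ (p - 1)) ^ (1 / (p - 1))
          - (ℓ ^ (p - 1) + ((1 - (2 : ℝ) ^ (-(i : ℝ))) * k) ^ (p - 1)) ^ (1 / (p - 1))) ^ p
        ≥ k ^ p /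
            ((if p < 2 then 1 else (p - 1) ^ p * (2 : ℝ) ^ (p * (p + 1) * (p - 2) / (p - 1)))
              * (2 : ℝ) ^ (((i : ℝ) + 2) * p * max 2 p)) := by
  intro i
  have hp0 : (0:ℝ) < p := by linarith
  have hq0 : (0:ℝ) < p - 1 := by linarith
  have hi0 : (0:ℝ) ≤ (i:ℝ) := Nat.cast_nonneg i
  set q := p - 1 with hqdef
  set a := (1 - (2:ℝ) ^ (-(i:ℝ))) * k with hadef
  set b := (1 - (2:ℝ) ^ (-((i:ℝ)+1))) * k with hbdef
  have he0pos : (0:ℝ) < (2:ℝ) ^ (-(i:ℝ)) := Real.rpow_pos_of_pos two_pos _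
  have he1pos : (0:ℝ) < (2:ℝ) ^ (-((i:ℝ)+1)) := Real.rpow_pos_of_pos two_pos _
  have he : (2:ℝ) ^ (-(i:ℝ)) = 2 * (2:ℝ) ^ (-((i:ℝ)+1)) := by
    rw [show (-(i:ℝ)) = 1 + (-((i:ℝ)+1)) by ring, Real.rpow_add two_pos, Real.rpow_one]
  have hneg1 : (2:ℝ) ^ (-1:ℝ) = 1/2 := by
    rw [show (-1:ℝ) = ((-1:ℤ):ℝ) by norm_num, Real.rpow_intCast]; norm_num
  have he1half : (2:ℝ) ^ (-((i:ℝ)+1)) ≤ 1/2 := by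
    rw [← hneg1]
    exact Real.rpow_le_rpow_of_exponent_le one_le_two (by linarith)
  have he0le1 : (2:ℝ) ^ (-(i:ℝ)) ≤ 1 :=
    Real.rpow_le_one_of_one_le_of_nonpos one_le_two (by linarith)
  have ha0 : 0 ≤ a := by
    rw [hadef]; nlinarith
  have hab : a < b := by
    rw [hadef, hbdef]; nlinarith
  have hbk : b ≤ k := by
    rw [hbdef]; nlinarith
  have hk2b : k/2 ≤ b := by
    rw [hbdef]; nlinarith
  have hba : b - a = k * (2:ℝ) ^ (-((i:ℝ)+1)) := by
    rw [hadef, hbdef, he]; ring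
  rw [ge_iff_le]
  rcases lt_or_ge p 2 with hp2 | hp2
  · -- case 1 < p < 2
    rw [if_pos hp2, max_eq_left hp2.le]
    have hq1 : q ≤ 1 := by rw [hqdef]; linarith
    have hgap : k * (2:ℝ) ^ (-((i:ℝ)+1)) ≤
        (ℓ ^ q + b ^ q) ^ (1/q) - (ℓ ^ q + a ^ q) ^ (1/q) := by
      rw [← hba]
      exact stmt15_gap_le_one q ℓ hq0 hq1 hℓ ha0 hab
    have hGpos : (0:ℝ) < k * (2:ℝ) ^ (-((i:ℝ)+1)) := by positivity
    have h1 : (k * (2:ℝ) ^ (-((i:ℝ)+1))) ^ p ≤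
        ((ℓ ^ q + b ^ q) ^ (1/q) - (ℓ ^ q + a ^ q) ^ (1/q)) ^ p :=
      Real.rpow_le_rpow hGpos.le hgap hp0.le
    have h2 : (k * (2:ℝ) ^ (-((i:ℝ)+1))) ^ p = k ^ p * (2:ℝ) ^ (-((i:ℝ)+1) * p) := by
      rw [Real.mul_rpow hk.le he1pos.le, ← Real.rpow_mul (by norm_num : (0:ℝ) ≤ 2)]
    have h3 : k ^ p / (1 * (2:ℝ) ^ (((i:ℝ)+2) * p * 2)) ≤ k ^ p * (2:ℝ) ^ (-((i:ℝ)+1) * p) := by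
      rw [one_mul, div_eq_mul_inv, ← Real.rpow_neg (by norm_num : (0:ℝ) ≤ 2)]
      apply mul_le_mul_of_nonneg_left _ (Real.rpow_nonneg hk.le p)
      apply Real.rpow_le_rpow_of_exponent_le one_le_two
      nlinarith
    calc k ^ p / (1 * (2:ℝ) ^ (((i:ℝ)+2) * p * 2)) ≤ k ^ p * (2:ℝ) ^ (-((i:ℝ)+1) * p) := h3
      _ = (k * (2:ℝ) ^ (-((i:ℝ)+1))) ^ p := h2.symm
      _ ≤ _ := h1
  · -- case p ≥ 2
    rw [if_neg (not_lt.2 hp2), max_eq_right hp2]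
    have hℓk' : ℓ ≤ k := hℓk hp2
    have hq1 : 1 ≤ q := by rw [hqdef]; linarith
    set a' := max a (k/4) with ha'def
    have hk4pos : (0:ℝ) < k/4 := by linarith
    have ha'pos : 0 < a' := lt_of_lt_of_le hk4pos (le_max_right _ _)
    have ha'lt : a' < b := max_lt hab (by linarith)
    have ha'ge : k/4 ≤ a' := le_max_right _ _
    have haa' : a ≤ a' := le_max_left _ _
    have hneg2 : (2:ℝ) ^ (-2:ℝ) = 1/4 := by
      rw [show (-2:ℝ) = ((-2:ℤ):ℝ) by norm_num, Real.rpow_intCast]; norm_num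
    have he2quarter : (2:ℝ) ^ (-((i:ℝ)+2)) ≤ 1/4 := by
      rw [← hneg2]
      exact Real.rpow_le_rpow_of_exponent_le one_le_two (by linarith)
    have he2pos : (0:ℝ) < (2:ℝ) ^ (-((i:ℝ)+2)) := Real.rpow_pos_of_pos two_pos _
    have hlen : k * (2:ℝ) ^ (-((i:ℝ)+2)) ≤ b - a' := by
      rcases max_cases a (k/4) with ⟨h1, h2⟩ | ⟨h1, h2⟩ <;> rw [ha'def, h1]
      · rw [hba]
        have : (2:ℝ) ^ (-((i:ℝ)+2)) ≤ (2:ℝ) ^ (-((i:ℝ)+1)) :=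
          Real.rpow_le_rpow_of_exponent_le one_le_two (by linarith)
        nlinarith
      · nlinarith
    have hmpos : (0:ℝ) < (2:ℝ) ^ (1 - 2*q) := Real.rpow_pos_of_pos two_pos _
    have hm : ∀ x ∈ Set.Icc a' b,
        (2:ℝ) ^ (1 - 2*q) ≤ x ^ (q - 1) * (ℓ ^ q + x ^ q) ^ (1 / q - 1) := by
      intro x hx
      have hx4 : k/4 ≤ x := le_trans ha'ge hx.1
      have hxk : x ≤ k := le_trans hx.2 hbk
      have hx0 : 0 < x := lt_of_lt_of_le hk4pos hx4
      have hA : (k/4) ^ (q-1) ≤ x ^ (q-1) :=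
        Real.rpow_le_rpow hk4pos.le hx4 (by linarith)
      have hBl : ℓ ^ q ≤ k ^ q := Real.rpow_le_rpow hℓ hℓk' hq0.le
      have hBx : x ^ q ≤ k ^ q := Real.rpow_le_rpow hx0.le hxk hq0.le
      have hB : ℓ ^ q + x ^ q ≤ 2 * k ^ q := by linarith
      have hgpos : (0:ℝ) < ℓ ^ q + x ^ q := by
        have := Real.rpow_pos_of_pos hx0 q; positivity
      have hez : 1/q - 1 ≤ 0 := by
        have : 1/q ≤ 1 := by rw [div_le_one hq0]; linarith
        linarith
      have hC : (2 * k ^ q) ^ (1/q - 1) ≤ (ℓ ^ q + x ^ q) ^ (1/q - 1) :=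
        Real.rpow_le_rpow_of_nonpos hgpos hB hez
      have hD : (2:ℝ) ^ (1 - 2*q) ≤ (k/4) ^ (q-1) * (2 * k ^ q) ^ (1/q - 1) := by
        have e1 : (k/4) ^ (q-1) = k ^ (q-1) / (2:ℝ) ^ (2*(q-1)) := by
          rw [Real.div_rpow hk.le (by norm_num : (0:ℝ) ≤ 4)]
          congr 1
          rw [Real.rpow_mul (by norm_num : (0:ℝ) ≤ 2)]
          norm_num
        have e2 : (2 * k ^ q) ^ (1/q - 1) = (2:ℝ) ^ (1/q - 1) * k ^ (1 - q) := by
          rw [Real.mul_rpow (by norm_num) (Real.rpow_nonneg hk.le q),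
            ← Real.rpow_mul hk.le]
          congr 1
          rw [mul_sub, mul_one_div_cancel hq0.ne', mul_one]
        have e3 : k ^ (q-1) * k ^ (1-q) = 1 := by
          rw [← Real.rpow_add hk]; norm_num
        have e4 : (k/4) ^ (q-1) * (2 * k ^ q) ^ (1/q - 1)
            = (2:ℝ) ^ (1/q - 1 - 2*(q-1)) := by
          have er : k ^ (q-1) / (2:ℝ) ^ (2*(q-1)) * ((2:ℝ) ^ (1/q-1) * k ^ (1-q))
              = k ^ (q-1) * k ^ (1-q) * ((2:ℝ) ^ (1/q-1) / (2:ℝ) ^ (2*(q-1))) := by ring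
          rw [e1, e2, er, e3, one_mul, ← Real.rpow_sub two_pos]
        rw [e4]
        apply Real.rpow_le_rpow_of_exponent_le one_le_two
        have : 0 < 1/q := by positivity
        linarith
      calc (2:ℝ) ^ (1 - 2*q) ≤ (k/4) ^ (q-1) * (2 * k ^ q) ^ (1/q - 1) := hD
        _ ≤ x ^ (q-1) * (2 * k ^ q) ^ (1/q - 1) :=
            mul_le_mul_of_nonneg_right hA (Real.rpow_nonneg (by positivity) _)
        _ ≤ x ^ (q-1) * (ℓ ^ q + x ^ q) ^ (1/q - 1) :=
            mul_le_mul_of_nonneg_left hC (Real.rpow_nonneg hx0.le _)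
    have hmvt := stmt15_mvt q ℓ hq0 hℓ ha'pos ha'lt hm
    have hFa : (ℓ ^ q + a ^ q) ^ (1/q) ≤ (ℓ ^ q + a' ^ q) ^ (1/q) := by
      apply Real.rpow_le_rpow (by positivity)
      · have : a ^ q ≤ a' ^ q := Real.rpow_le_rpow ha0 haa' hq0.le
        linarith
      · positivity
    have hgap : k * (2:ℝ) ^ (-((i:ℝ)+2)) * (2:ℝ) ^ (1 - 2*q) ≤
        (ℓ ^ q + b ^ q) ^ (1/q) - (ℓ ^ q + a ^ q) ^ (1/q) := by
      have h5 : k * (2:ℝ) ^ (-((i:ℝ)+2)) * (2:ℝ) ^ (1 - 2*q) ≤ (b - a') * (2:ℝ) ^ (1 - 2*q) :=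
        mul_le_mul_of_nonneg_right hlen hmpos.le
      linarith
    set G := k * (2:ℝ) ^ (-((i:ℝ)+2)) * (2:ℝ) ^ (1 - 2*q) with hGdef
    have hGpos : 0 < G := by positivity
    have h1 : G ^ p ≤ ((ℓ ^ q + b ^ q) ^ (1/q) - (ℓ ^ q + a ^ q) ^ (1/q)) ^ p :=
      Real.rpow_le_rpow hGpos.le hgap hp0.le
    have h2 : G ^ p = k ^ p * (2:ℝ) ^ ((-((i:ℝ)+2) + (1 - 2*q)) * p) := by
      rw [hGdef, mul_assoc, ← Real.rpow_add two_pos,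
        Real.mul_rpow hk.le (Real.rpow_pos_of_pos two_pos _).le,
        ← Real.rpow_mul (by norm_num : (0:ℝ) ≤ 2)]
    have hcp1 : (1:ℝ) ≤ (p-1) ^ p := by
      calc (1:ℝ) = (1:ℝ) ^ p := (Real.one_rpow p).symm
        _ ≤ (p-1) ^ p := Real.rpow_le_rpow (by norm_num) (by linarith) hp0.le
    have hcp2 : (1:ℝ) ≤ (2:ℝ) ^ (p * (p+1) * (p-2) / (p-1)) := by
      rw [show (1:ℝ) = (2:ℝ) ^ (0:ℝ) by rw [Real.rpow_zero]]
      apply Real.rpow_le_rpow_of_exponent_le one_le_two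
      apply div_nonneg (mul_nonneg (mul_nonneg hp0.le (by linarith)) (by linarith)) (by linarith)
    have hE2pos : (0:ℝ) < (2:ℝ) ^ (((i:ℝ)+2) * p * p) := Real.rpow_pos_of_pos two_pos _
    have hden : (2:ℝ) ^ (((i:ℝ)+2) * p * p) ≤
        (p-1) ^ p * (2:ℝ) ^ (p * (p+1) * (p-2) / (p-1)) * (2:ℝ) ^ (((i:ℝ)+2) * p * p) := by
      have hAB : (1:ℝ) ≤ (p-1) ^ p * (2:ℝ) ^ (p * (p+1) * (p-2) / (p-1)) := by
        nlinarith [mul_nonneg (sub_nonneg.2 hcp1) (sub_nonneg.2 hcp2)]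
      nlinarith [hE2pos, hAB]
    have h3 : k ^ p / ((p-1) ^ p * (2:ℝ) ^ (p * (p+1) * (p-2) / (p-1))
          * (2:ℝ) ^ (((i:ℝ)+2) * p * p)) ≤ k ^ p / (2:ℝ) ^ (((i:ℝ)+2) * p * p) := by
      gcongr
    have h4 : k ^ p / (2:ℝ) ^ (((i:ℝ)+2) * p * p) ≤
        k ^ p * (2:ℝ) ^ ((-((i:ℝ)+2) + (1 - 2*q)) * p) := by
      rw [div_eq_mul_inv, ← Real.rpow_neg (by norm_num : (0:ℝ) ≤ 2)]
      apply mul_le_mul_of_nonneg_left _ (Real.rpow_nonneg hk.le p)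
      apply Real.rpow_le_rpow_of_exponent_le one_le_two
      rw [hqdef]
      nlinarith [mul_nonneg (mul_nonneg hi0 (by linarith : (0:ℝ) ≤ p - 1)) hp0.le]
    calc k ^ p / ((p-1) ^ p * (2:ℝ) ^ (p * (p+1) * (p-2) / (p-1))
          * (2:ℝ) ^ (((i:ℝ)+2) * p * p)) ≤ k ^ p / (2:ℝ) ^ (((i:ℝ)+2) * p * p) := h3
      _ ≤ k ^ p * (2:ℝ) ^ ((-((i:ℝ)+2) + (1 - 2*q)) * p) := h4
      _ = G ^ p := h2.symm
      _ ≤ _ := h1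
end

section
/- Let α > 0 be real. Set C₁ := α and C₂ := 2^{1−α} if α ∈ (0,1], and C₁ := 2^{1−α} and C₂ := α if α ∈ [1,∞). Then for all a, b ∈ ℝ: C₁ (|a|+|b|)^{α−1} |a−b| ≤ | |b|^{α−1} b − |a|^{α−1} a | ≤ C₂ (|a|+|b|)^{α−1} |a−b|, with the convention that the expression (|a|+|b|)^{α−1}|a−b| is interpreted as 0 when a = b (so that for a = b all three quantities vanish). -/
/-!
Write `φ(x) = |x|^{α-1} x`. Both sides are symmetric in `a, b` and invariant under
`(a, b) ↦ (-a, -b)`, so one may assume `|a| ≤ b`.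

If `a ≥ 0`, then `φ b - φ a = b^α - a^α`, which lies between `b^{α-1}(b-a)` (compare `a^α`
with `b^{α-1} a`) and `α b^{α-1}(b-a)` (the tangent of the convex, resp. concave, map
`t ↦ t^α` at `b`); and `b^{α-1}` lies between `((a+b)/2)^{α-1} = 2^{1-α}(a+b)^{α-1}` and
`(a+b)^{α-1}`.

If `a < 0`, then `φ b - φ a = b^α + |a|^α`, which lies between `2((b+|a|)/2)^α` (Jensen) and
`(b+|a|)^α` (super-, resp. subadditivity of `t ↦ t^α`).
-/

open Real Set

namespace Real

variable {α x y : ℝ}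

lemma rpow_sub_one_mul_self (hx : 0 ≤ x) (hα : α ≠ 0) : x ^ (α - 1) * x = x ^ α := by
  rw [← rpow_add_one' hx (by simpa using hα), sub_add_cancel]

lemma div_two_rpow (hx : 0 ≤ x) (β : ℝ) : (x / 2) ^ β = 2 ^ (-β) * x ^ β := by
  rw [div_rpow hx zero_le_two, rpow_neg zero_le_two, div_eq_inv_mul]

lemma rpow_sub_rpow_le_mul_rpow_sub_one_mul_sub (hα : 1 ≤ α) (hy : 0 ≤ y) (hyx : y ≤ x) :
    x ^ α - y ^ α ≤ α * x ^ (α - 1) * (x - y) := by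
  rcases hyx.eq_or_lt with rfl | hlt
  · simp
  have hx : 0 < x := hy.trans_lt hlt
  have hslope := (convexOn_rpow hα).slope_le_of_hasDerivAt (mem_Ici.2 hy) (mem_Ici.2 hx.le) hlt
    (hasDerivAt_rpow_const (Or.inl hx.ne'))
  rwa [slope_def_field, div_le_iff₀ (sub_pos.2 hlt)] at hslope

lemma mul_rpow_sub_one_mul_sub_le_rpow_sub_rpow (hα₀ : 0 ≤ α) (hα : α ≤ 1) (hy : 0 ≤ y)
    (hyx : y ≤ x) : α * x ^ (α - 1) * (x - y) ≤ x ^ α - y ^ α := by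
  rcases hyx.eq_or_lt with rfl | hlt
  · simp
  have hx : 0 < x := hy.trans_lt hlt
  have hslope := (concaveOn_rpow hα₀ hα).le_slope_of_hasDerivAt (mem_Ici.2 hy) (mem_Ici.2 hx.le)
    hlt (hasDerivAt_rpow_const (Or.inl hx.ne'))
  rwa [slope_def_field, le_div_iff₀ (sub_pos.2 hlt)] at hslope

lemma rpow_sub_one_mul_sub_le_rpow_sub_rpow (hα : 1 ≤ α) (hy : 0 ≤ y) (hyx : y ≤ x) :
    x ^ (α - 1) * (x - y) ≤ x ^ α - y ^ α := by
  have hα₀ : α ≠ 0 := by positivity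
  have : y ^ (α - 1) * y ≤ x ^ (α - 1) * y := by gcongr
  rw [rpow_sub_one_mul_self hy hα₀] at this
  linarith [rpow_sub_one_mul_self (hy.trans hyx) hα₀]

lemma rpow_sub_rpow_le_rpow_sub_one_mul_sub (hα₀ : 0 < α) (hα : α ≤ 1) (hy : 0 ≤ y)
    (hyx : y ≤ x) : x ^ α - y ^ α ≤ x ^ (α - 1) * (x - y) := by
  rw [mul_sub, rpow_sub_one_mul_self (hy.trans hyx) hα₀.ne', sub_le_sub_iff_left]
  rcases hy.eq_or_lt with rfl | hy
  · simp [zero_rpow hα₀.ne']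
  calc x ^ (α - 1) * y ≤ y ^ (α - 1) * y :=
        mul_le_mul_of_nonneg_right (rpow_le_rpow_of_nonpos hy hyx (by linarith)) hy.le
    _ = y ^ α := rpow_sub_one_mul_self hy.le hα₀.ne'

lemma two_rpow_one_sub_mul_rpow_sub_one (hx : 0 ≤ x) :
    (2 : ℝ) ^ (1 - α) * x ^ (α - 1) = (x / 2) ^ (α - 1) := by
  rw [div_two_rpow hx, neg_sub]

lemma two_rpow_one_sub_mul_rpow (hx : 0 ≤ x) :
    (2 : ℝ) ^ (1 - α) * x ^ α = 2 * (x / 2) ^ α := by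
  rw [div_two_rpow hx, sub_eq_add_neg, rpow_add zero_lt_two, rpow_one, mul_assoc]

lemma rpow_sub_rpow_bounds_of_one_le (hα : 1 ≤ α) (hy : 0 ≤ y) (hyx : y ≤ x) :
    2 ^ (1 - α) * (y + x) ^ (α - 1) * (x - y) ≤ x ^ α - y ^ α ∧
      x ^ α - y ^ α ≤ α * (y + x) ^ (α - 1) * (x - y) := by
  have hxy : 0 ≤ x - y := sub_nonneg.2 hyx
  constructor
  · calc 2 ^ (1 - α) * (y + x) ^ (α - 1) * (x - y) = ((y + x) / 2) ^ (α - 1) * (x - y) := by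
          rw [two_rpow_one_sub_mul_rpow_sub_one (by linarith)]
      _ ≤ x ^ (α - 1) * (x - y) := by gcongr <;> linarith
      _ ≤ x ^ α - y ^ α := rpow_sub_one_mul_sub_le_rpow_sub_rpow hα hy hyx
  · calc x ^ α - y ^ α ≤ α * x ^ (α - 1) * (x - y) :=
          rpow_sub_rpow_le_mul_rpow_sub_one_mul_sub hα hy hyx
      _ ≤ α * (y + x) ^ (α - 1) * (x - y) := by gcongr <;> linarith

lemma rpow_sub_rpow_bounds_of_le_one (hα₀ : 0 < α) (hα : α ≤ 1) (hy : 0 ≤ y)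
    (hyx : y ≤ x) :
    α * (y + x) ^ (α - 1) * (x - y) ≤ x ^ α - y ^ α ∧
      x ^ α - y ^ α ≤ 2 ^ (1 - α) * (y + x) ^ (α - 1) * (x - y) := by
  rcases hyx.eq_or_lt with rfl | hlt
  · simp
  have hx : 0 < x := hy.trans_lt hlt
  have hxy : 0 ≤ x - y := sub_nonneg.2 hyx
  constructor
  · have hpow : (y + x) ^ (α - 1) ≤ x ^ (α - 1) :=
      rpow_le_rpow_of_nonpos hx (by linarith) (by linarith)
    calc α * (y + x) ^ (α - 1) * (x - y) ≤ α * x ^ (α - 1) * (x - y) := by gcongr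
      _ ≤ x ^ α - y ^ α := mul_rpow_sub_one_mul_sub_le_rpow_sub_rpow hα₀.le hα hy hyx
  · have hpow : x ^ (α - 1) ≤ ((y + x) / 2) ^ (α - 1) :=
      rpow_le_rpow_of_nonpos (by linarith) (by linarith) (by linarith)
    calc x ^ α - y ^ α ≤ x ^ (α - 1) * (x - y) :=
          rpow_sub_rpow_le_rpow_sub_one_mul_sub hα₀ hα hy hyx
      _ ≤ ((y + x) / 2) ^ (α - 1) * (x - y) := by gcongr
      _ = 2 ^ (1 - α) * (y + x) ^ (α - 1) * (x - y) := by
          rw [two_rpow_one_sub_mul_rpow_sub_one (by linarith)]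

lemma rpow_add_rpow_bounds_of_one_le (hα : 1 ≤ α) (hx : 0 ≤ x) (hy : 0 ≤ y) :
    2 ^ (1 - α) * (x + y) ^ α ≤ x ^ α + y ^ α ∧ x ^ α + y ^ α ≤ α * (x + y) ^ α := by
  constructor
  · have hmid := (convexOn_rpow hα).2 (mem_Ici.2 hx) (mem_Ici.2 hy)
      (by norm_num : (0 : ℝ) ≤ 1 / 2) (by norm_num : (0 : ℝ) ≤ 1 / 2) (by norm_num)
    simp only [smul_eq_mul] at hmid
    rw [two_rpow_one_sub_mul_rpow (by positivity),
      show (x + y) / 2 = 1 / 2 * x + 1 / 2 * y by ring]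
    linarith
  · calc x ^ α + y ^ α ≤ (x + y) ^ α := add_rpow_le_rpow_add hx hy hα
      _ ≤ α * (x + y) ^ α := le_mul_of_one_le_left (by positivity) hα

lemma rpow_add_rpow_bounds_of_le_one (hα₀ : 0 ≤ α) (hα : α ≤ 1) (hx : 0 ≤ x)
    (hy : 0 ≤ y) :
    α * (x + y) ^ α ≤ x ^ α + y ^ α ∧ x ^ α + y ^ α ≤ 2 ^ (1 - α) * (x + y) ^ α := by
  constructor
  · calc α * (x + y) ^ α ≤ (x + y) ^ α := mul_le_of_le_one_left (by positivity) hα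
      _ ≤ x ^ α + y ^ α := rpow_add_le_add_rpow hx hy hα₀ hα
  · have hmid := (concaveOn_rpow hα₀ hα).2 (mem_Ici.2 hx) (mem_Ici.2 hy)
      (by norm_num : (0 : ℝ) ≤ 1 / 2) (by norm_num : (0 : ℝ) ≤ 1 / 2) (by norm_num)
    simp only [smul_eq_mul] at hmid
    rw [two_rpow_one_sub_mul_rpow (by positivity),
      show (x + y) / 2 = 1 / 2 * x + 1 / 2 * y by ring]
    linarith

end Real

def OddPowBounds (α C₁ C₂ a b : ℝ) : Prop :=
  C₁ * (|a| + |b|) ^ (α - 1) * |a - b| ≤ |(|b| ^ (α - 1) * b - |a| ^ (α - 1) * a)| ∧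
    |(|b| ^ (α - 1) * b - |a| ^ (α - 1) * a)| ≤ C₂ * (|a| + |b|) ^ (α - 1) * |a - b|

namespace OddPowBounds

variable {α C₁ C₂ a b c : ℝ}

lemma symm (h : OddPowBounds α C₁ C₂ a b) : OddPowBounds α C₁ C₂ b a := by
  unfold OddPowBounds at *
  rwa [add_comm |b|, abs_sub_comm b, abs_sub_comm (|a| ^ (α - 1) * a)]

lemma of_neg (h : OddPowBounds α C₁ C₂ (-a) (-b)) : OddPowBounds α C₁ C₂ a b := by
  unfold OddPowBounds at *
  rwa [abs_neg, abs_neg, neg_sub_neg, abs_sub_comm b, mul_neg, mul_neg, neg_sub_neg,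
    abs_sub_comm (|a| ^ (α - 1) * a)] at h

lemma of_nonneg_of_le (hα : 0 < α) (ha : 0 ≤ a) (hab : a ≤ b)
    (h : C₁ * (a + b) ^ (α - 1) * (b - a) ≤ b ^ α - a ^ α ∧
      b ^ α - a ^ α ≤ C₂ * (a + b) ^ (α - 1) * (b - a)) :
    OddPowBounds α C₁ C₂ a b := by
  have hb : 0 ≤ b := ha.trans hab
  unfold OddPowBounds
  rwa [abs_of_nonneg ha, abs_of_nonneg hb, abs_sub_comm, abs_of_nonneg (sub_nonneg.2 hab),
    rpow_sub_one_mul_self ha hα.ne', rpow_sub_one_mul_self hb hα.ne',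
    abs_of_nonneg (sub_nonneg.2 (rpow_le_rpow ha hab hα.le))]

lemma of_neg_of_nonneg (hα : 0 < α) (hc : 0 ≤ c) (hb : 0 ≤ b)
    (h : C₁ * (c + b) ^ α ≤ c ^ α + b ^ α ∧ c ^ α + b ^ α ≤ C₂ * (c + b) ^ α) :
    OddPowBounds α C₁ C₂ (-c) b := by
  have hcb : 0 ≤ c + b := add_nonneg hc hb
  have hodd : c ^ (α - 1) * -c = -c ^ α := by rw [mul_neg, rpow_sub_one_mul_self hc hα.ne']
  unfold OddPowBounds
  rwa [abs_neg, abs_of_nonneg hc, abs_of_nonneg hb, hodd, rpow_sub_one_mul_self hb hα.ne',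
    sub_neg_eq_add, add_comm (b ^ α), ← neg_add', abs_neg, abs_of_nonneg hcb,
    abs_of_nonneg (add_nonneg (rpow_nonneg hc α) (rpow_nonneg hb α)), mul_assoc,
    rpow_sub_one_mul_self hcb hα.ne', mul_assoc, rpow_sub_one_mul_self hcb hα.ne']

lemma of_nonneg_cases (hα : 0 < α)
    (hsame : ∀ x y : ℝ, 0 ≤ y → y ≤ x →
      C₁ * (y + x) ^ (α - 1) * (x - y) ≤ x ^ α - y ^ α ∧
        x ^ α - y ^ α ≤ C₂ * (y + x) ^ (α - 1) * (x - y))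
    (hopp : ∀ x y : ℝ, 0 ≤ x → 0 ≤ y → C₁ * (x + y) ^ α ≤ x ^ α + y ^ α ∧
      x ^ α + y ^ α ≤ C₂ * (x + y) ^ α)
    (a b : ℝ) : OddPowBounds α C₁ C₂ a b := by
  wlog hab : |a| ≤ |b| generalizing a b
  · exact (this b a (le_of_not_ge hab)).symm
  wlog hb : 0 ≤ b generalizing a b
  · exact (this (-a) (-b) (by simpa) (by linarith)).of_neg
  rcases le_or_gt 0 a with ha | ha
  · have hab' : a ≤ b := (le_abs_self a).trans (hab.trans_eq (abs_of_nonneg hb))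
    exact of_nonneg_of_le hα ha hab' (hsame b a ha hab')
  · obtain ⟨c, rfl⟩ : ∃ c, a = -c := ⟨-a, (neg_neg a).symm⟩
    exact of_neg_of_nonneg hα (by linarith) hb (hopp c b (by linarith) hb)

end OddPowBounds

/-- algebraic inequality for odd powers, Lemma A.4: with
`C₁ = α`, `C₂ = 2^{1-α}` for `α ∈ (0,1]` and `C₁ = 2^{1-α}`, `C₂ = α` for
`α ∈ [1,∞)`.  The convention that `(|a|+|b|)^{α-1}|a-b|` is interpreted as `0`
when `a = b` is automatic from `Real.rpow` junk values together with the factor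
`|a-b| = 0`. -/
theorem statement16 (α : ℝ) (hα : 0 < α) :
    ∀ a b : ℝ,
      (if α ≤ 1 then α else (2 : ℝ) ^ (1 - α)) * (|a| + |b|) ^ (α - 1) * |a - b|
          ≤ |(|b| ^ (α - 1) * b - |a| ^ (α - 1) * a)| ∧
        |(|b| ^ (α - 1) * b - |a| ^ (α - 1) * a)|
          ≤ (if α ≤ 1 then (2 : ℝ) ^ (1 - α) else α) * (|a| + |b|) ^ (α - 1) * |a - b| := by
  rcases le_or_gt α 1 with h | h
  · simp only [if_pos h]
    exact OddPowBounds.of_nonneg_cases hα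
      (fun _ _ hy hyx => rpow_sub_rpow_bounds_of_le_one hα h hy hyx)
      (fun _ _ hx hy => rpow_add_rpow_bounds_of_le_one hα.le h hx hy)
  · simp only [if_neg h.not_ge]
    exact OddPowBounds.of_nonneg_cases hα
      (fun _ _ hy hyx => rpow_sub_rpow_bounds_of_one_le h.le hy hyx)
      (fun _ _ hx hy => rpow_add_rpow_bounds_of_one_le h.le hx hy)
end
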